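/- arXiv:2604.27366 — 3 statements merged into one kernel-verified Lean document; each statement's English description precedes it below -/
import Mathlib

section
/- If Q is L_Q-Lipschitz on a metric space (A,d), C is L_C-Lipschitz, the critic satisfies Q(C(a)) - Q(a) ≥ β(Q* - Q(a)) for all a in a finite nonempty set T, and Q(a) ≤ Q* for all a, then for any A₀ with ρ₀ = min_{a∈T} d(A₀,a), we have Q(C(A₀)) ≥ β·Q* + (1-β)·Q(A₀) - ρ₀·L_Q·(1-β+L_C). -/
/-! The improvement guaranteed at a point `a` of `T` survives, up to an error linear in the
distance, at every point `x`: Lipschitz continuity of `Q ∘ C` controls `Q (C x)` against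
`Q (C a)`, and Lipschitz continuity of `Q` controls `Q a` against `Q x`. Applying this with `a`
a point of `T` nearest to `A₀` gives the theorem. -/

theorem sub_mul_dist_le_of_abs_sub_le {α : Type*} [PseudoMetricSpace α] {Q : α → ℝ} {LQ : ℝ}
    (hQlip : ∀ x y : α, |Q x - Q y| ≤ LQ * dist x y) (x y : α) :
    Q y - LQ * dist x y ≤ Q x := by
  linarith [(abs_le.1 (hQlip x y)).1]

theorem improvement_ge_sub_dist_mul {α : Type*} [PseudoMetricSpace α]
    {Q : α → ℝ} {Qstar : ℝ} {C : α → α} {β LQ LC : ℝ} (hβ : β ≤ 1) (hLQ : 0 ≤ LQ)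
    (hQlip : ∀ x y : α, |Q x - Q y| ≤ LQ * dist x y)
    (hClip : ∀ x y : α, dist (C x) (C y) ≤ LC * dist x y)
    {a : α} (ha : Q (C a) - Q a ≥ β * (Qstar - Q a)) (x : α) :
    Q (C x) ≥ β * Qstar + (1 - β) * Q x - dist x a * LQ * (1 - β + LC) := by
  have hQa : Q x - LQ * dist x a ≤ Q a := by
    simpa only [dist_comm] using sub_mul_dist_le_of_abs_sub_le hQlip a x
  calc Q (C x)
      ≥ Q (C a) - LQ * dist (C x) (C a) := sub_mul_dist_le_of_abs_sub_le hQlip (C x) (C a)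
    _ ≥ Q (C a) - LQ * (LC * dist x a) := by gcongr; exact hClip x a
    _ ≥ β * Qstar + (1 - β) * Q a - LQ * (LC * dist x a) := by linarith
    _ ≥ β * Qstar + (1 - β) * (Q x - LQ * dist x a) - LQ * (LC * dist x a) := by
        gcongr
    _ = β * Qstar + (1 - β) * Q x - dist x a * LQ * (1 - β + LC) := by ring

theorem stmt0_general {α : Type*} [MetricSpace α]
    (Q : α → ℝ) (Qstar : ℝ) (C : α → α) (β LQ LC : ℝ)
    (hβ : β ∈ Set.Ioo (0:ℝ) 1) (hLQ : 0 < LQ)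
    (hQlip : ∀ x y : α, |Q x - Q y| ≤ LQ * dist x y)
    (hClip : ∀ x y : α, dist (C x) (C y) ≤ LC * dist x y)
    (T : Finset α) (hT : T.Nonempty)
    (himp : ∀ a ∈ T, Q (C a) - Q a ≥ β * (Qstar - Q a))
    (A₀ : α) :
    Q (C A₀) ≥ β * Qstar + (1 - β) * Q A₀
      - (T.inf' hT fun a => dist A₀ a) * LQ * (1 - β + LC) := by
  obtain ⟨a, haT, hnearest⟩ := T.exists_mem_eq_inf' hT fun a => dist A₀ a
  rw [hnearest]
  exact improvement_ge_sub_dist_mul hβ.2.le hLQ.le hQlip hClip (himp a haT) A₀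

theorem stmt0 {α : Type*} [MetricSpace α]
    (Q : α → ℝ) (Qstar : ℝ) (C : α → α) (β LQ LC : ℝ)
    (hβ : β ∈ Set.Ioo (0:ℝ) 1) (hLQ : 0 < LQ) (hLC : 0 < LC)
    (hQlip : ∀ x y : α, |Q x - Q y| ≤ LQ * dist x y)
    (hClip : ∀ x y : α, dist (C x) (C y) ≤ LC * dist x y)
    (T : Finset α) (hT : T.Nonempty)
    (himp : ∀ a ∈ T, Q (C a) - Q a ≥ β * (Qstar - Q a))
    (hub : ∀ a : α, Q a ≤ Qstar)
    (A₀ : α) :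
    Q (C A₀) ≥ β * Qstar + (1 - β) * Q A₀
      - (T.inf' hT fun a => dist A₀ a) * LQ * (1 - β + LC) :=
  stmt0_general Q Qstar C β LQ LC hβ hLQ hQlip hClip T hT himp A₀
end

section
/- Under the same assumptions as Theorem 1, define the sequence A_{k+1} = C(A_k) and ρ_k = min_{a∈T} d(A_k, a). If for each k, ρ_k ≤ (β / (L_Q(1-β+L_C)))·(Q* - Q(A_k)), then the sequence Q(A_k) is monotonically nondecreasing. -/
/-!
Let `a ∈ T` be a point nearest to `x`, at distance `ρ`. Transporting the improvement
`Q (C a) - Q a ≥ β (Q* - Q a)` back to `x` through the Lipschitz bounds on `Q` and `Q ∘ C` gives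
`Q (C x) ≥ Q x + β (Q* - Q x) - L_Q (1 - β + L_C) ρ`, and the bound on `ρ` makes the loss at most
the gain.
-/

section

variable {α : Type*} [PseudoMetricSpace α] {Q : α → ℝ} {C : α → α} {Qstar β LQ LC : ℝ}

theorem add_sub_dist_le_map_of_improves (hQ : ∀ x y, |Q x - Q y| ≤ LQ * dist x y)
    (hC : ∀ x y, dist (C x) (C y) ≤ LC * dist x y) (hLQ : 0 ≤ LQ) (hβ : β ≤ 1) {x a : α}
    (ha : β * (Qstar - Q a) ≤ Q (C a) - Q a) :
    Q x + β * (Qstar - Q x) - LQ * (1 - β + LC) * dist x a ≤ Q (C x) := by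
  have hxa : Q x - Q a ≤ LQ * dist x a := (abs_le.mp (hQ x a)).2
  have hCxa : Q (C a) - Q (C x) ≤ LQ * (LC * dist x a) :=
    calc Q (C a) - Q (C x) ≤ LQ * dist (C a) (C x) := (abs_le.mp (hQ _ _)).2
      _ ≤ LQ * (LC * dist x a) := by
        rw [dist_comm x a]; exact mul_le_mul_of_nonneg_left (hC a x) hLQ
  nlinarith [mul_le_mul_of_nonneg_left hxa (sub_nonneg.mpr hβ)]

theorem le_map_of_dist_le_of_improves (hQ : ∀ x y, |Q x - Q y| ≤ LQ * dist x y)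
    (hC : ∀ x y, dist (C x) (C y) ≤ LC * dist x y) (hLQ : 0 < LQ) (hLC : 0 < LC) (hβ : β < 1)
    {x a : α} (ha : β * (Qstar - Q a) ≤ Q (C a) - Q a)
    (hdist : dist x a ≤ β / (LQ * (1 - β + LC)) * (Qstar - Q x)) :
    Q x ≤ Q (C x) := by
  have hpos : 0 < LQ * (1 - β + LC) := by nlinarith
  have hloss : LQ * (1 - β + LC) * dist x a ≤ β * (Qstar - Q x) := by
    rw [div_mul_eq_mul_div, le_div_iff₀ hpos] at hdist
    linarith
  linarith [add_sub_dist_le_map_of_improves hQ hC hLQ.le hβ.le ha (x := x)]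

end

theorem stmt1_general {α : Type*} [MetricSpace α]
    (Q : α → ℝ) (Qstar : ℝ) (C : α → α) (β LQ LC : ℝ)
    (hβ : β ∈ Set.Ioo (0:ℝ) 1) (hLQ : 0 < LQ) (hLC : 0 < LC)
    (hQlip : ∀ x y : α, |Q x - Q y| ≤ LQ * dist x y)
    (hClip : ∀ x y : α, dist (C x) (C y) ≤ LC * dist x y)
    (T : Finset α) (hT : T.Nonempty)
    (himp : ∀ a ∈ T, Q (C a) - Q a ≥ β * (Qstar - Q a))
    (A : ℕ → α) (hrec : ∀ k, A (k + 1) = C (A k))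
    (hρ : ∀ k, (T.inf' hT fun a => dist (A k) a)
      ≤ (β / (LQ * (1 - β + LC))) * (Qstar - Q (A k))) :
    ∀ k, Q (A k) ≤ Q (A (k + 1)) := by
  intro k
  obtain ⟨a, haT, hnearest⟩ := T.exists_mem_eq_inf' hT fun a => dist (A k) a
  rw [hrec k]
  exact le_map_of_dist_le_of_improves hQlip hClip hLQ hLC hβ.2 (himp a haT) (hnearest ▸ hρ k)

theorem stmt1 {α : Type*} [MetricSpace α]
    (Q : α → ℝ) (Qstar : ℝ) (C : α → α) (β LQ LC : ℝ)
    (hβ : β ∈ Set.Ioo (0:ℝ) 1) (hLQ : 0 < LQ) (hLC : 0 < LC)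
    (hQlip : ∀ x y : α, |Q x - Q y| ≤ LQ * dist x y)
    (hClip : ∀ x y : α, dist (C x) (C y) ≤ LC * dist x y)
    (T : Finset α) (hT : T.Nonempty)
    (himp : ∀ a ∈ T, Q (C a) - Q a ≥ β * (Qstar - Q a))
    (hub : ∀ a : α, Q a ≤ Qstar)
    (A : ℕ → α) (hrec : ∀ k, A (k + 1) = C (A k))
    (hρ : ∀ k, (T.inf' hT fun a => dist (A k) a)
      ≤ (β / (LQ * (1 - β + LC))) * (Qstar - Q (A k))) :
    ∀ k, Q (A k) ≤ Q (A (k + 1)) :=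
  stmt1_general Q Qstar C β LQ LC hβ hLQ hLC hQlip hClip T hT himp A hrec hρ
end

section
/- If the critic improvement holds with ratio β on T and Q(a) ≤ Q* for all a, then for any A₀ whose distance ρ₀ to T satisfies ρ₀ < β·(Q* - Q(A₀)) / (L_Q·(1-β+L_C)), the one-step refinement strictly improves the value: Q(C(A₀)) > Q(A₀), provided Q(A₀) < Q*. -/
/-! Let `a ∈ T` be a point nearest to `A₀`, at distance `ρ₀`. Adding `(1 - β) (Q a - Q A₀) ≥ -(1 - β) L_Q ρ₀`
and `Q (C A₀) - Q (C a) ≥ -L_Q L_C ρ₀` to the improvement at `a` gives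
`Q (C A₀) - Q A₀ ≥ β (Q* - Q A₀) - L_Q (1 - β + L_C) ρ₀`, which is positive under the bound on `ρ₀`. -/

theorem le_sub_of_improves_at_nearby {α : Type*} [PseudoMetricSpace α] {Q : α → ℝ}
    {C : α → α} {Qstar β LQ LC : ℝ} {x a : α} (hβ : β ≤ 1) (hLQ : 0 ≤ LQ)
    (hQ : |Q x - Q a| ≤ LQ * dist x a)
    (hQC : |Q (C x) - Q (C a)| ≤ LQ * dist (C x) (C a))
    (hC : dist (C x) (C a) ≤ LC * dist x a)
    (himp : β * (Qstar - Q a) ≤ Q (C a) - Q a) :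
    β * (Qstar - Q x) - LQ * (1 - β + LC) * dist x a ≤ Q (C x) - Q x := by
  have hQa : Q x - LQ * dist x a ≤ Q a := by linarith [(abs_le.mp hQ).2]
  have hQCx : Q (C a) - LQ * (LC * dist x a) ≤ Q (C x) := by
    linarith [(abs_le.mp hQC).1, mul_le_mul_of_nonneg_left hC hLQ]
  have hweight : 0 ≤ (1 - β) * (Q a - (Q x - LQ * dist x a)) :=
    mul_nonneg (sub_nonneg.mpr hβ) (sub_nonneg.mpr hQa)
  linarith

theorem stmt14_general {α : Type*} [MetricSpace α]
    (Q : α → ℝ) (Qstar : ℝ) (C : α → α) (β LQ LC : ℝ)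
    (hβ : β ∈ Set.Ioo (0:ℝ) 1) (hLQ : 0 < LQ) (hLC : 0 < LC)
    (hQlip : ∀ x y : α, |Q x - Q y| ≤ LQ * dist x y)
    (hClip : ∀ x y : α, dist (C x) (C y) ≤ LC * dist x y)
    (T : Finset α) (hT : T.Nonempty)
    (himp : ∀ a ∈ T, Q (C a) - Q a ≥ β * (Qstar - Q a))
    (A₀ : α)
    (hρ : (T.inf' hT fun a => dist A₀ a)
      < β * (Qstar - Q A₀) / (LQ * (1 - β + LC))) :
    Q (C A₀) > Q A₀ := by
  obtain ⟨a, ha, hnearest⟩ := T.exists_mem_eq_inf' hT (fun a => dist A₀ a)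
  have hden : 0 < LQ * (1 - β + LC) := mul_pos hLQ (by linarith [hβ.2])
  rw [hnearest, lt_div_iff₀ hden] at hρ
  have hgain := le_sub_of_improves_at_nearby hβ.2.le hLQ.le (hQlip A₀ a) (hQlip (C A₀) (C a))
    (hClip A₀ a) (himp a ha)
  linarith

theorem stmt14 {α : Type*} [MetricSpace α]
    (Q : α → ℝ) (Qstar : ℝ) (C : α → α) (β LQ LC : ℝ)
    (hβ : β ∈ Set.Ioo (0:ℝ) 1) (hLQ : 0 < LQ) (hLC : 0 < LC)
    (hub : ∀ a : α, Q a ≤ Qstar)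
    (hQlip : ∀ x y : α, |Q x - Q y| ≤ LQ * dist x y)
    (hClip : ∀ x y : α, dist (C x) (C y) ≤ LC * dist x y)
    (T : Finset α) (hT : T.Nonempty)
    (himp : ∀ a ∈ T, Q (C a) - Q a ≥ β * (Qstar - Q a))
    (A₀ : α)
    (hρ : (T.inf' hT fun a => dist A₀ a)
      < β * (Qstar - Q A₀) / (LQ * (1 - β + LC)))
    (hlt : Q A₀ < Qstar) :
    Q (C A₀) > Q A₀ :=
  stmt14_general Q Qstar C β LQ LC hβ hLQ hLC hQlip hClip T hT himp A₀ hρ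
end
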